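/- arXiv:1410.1184 — 2 statements merged into one kernel-verified Lean document; each statement's English description precedes it below -/
import Mathlib

section
/- Fix integers p ≥ 1, F ≥ 1 and a real λ > 0. Let S[1],…,S[F] be p×p Hermitian matrices with I ⪯ S[f] for all f and set K[f] := S[f]⁻¹. Let Ŝ[1],…,Ŝ[F] be p×p Hermitian matrices and set E[f] := S[f] - Ŝ[f]. If K̂[·] ∈ 𝒞 minimizes J(X) := -A{X} + ⟨Ŝ[·],X[·]⟩ + λ‖X‖₁ over 𝒞, then with Δ[·] := K̂[·] - K[·] it holds that λ‖K̂‖₁ ≤ λ‖K‖₁ + ⟨Δ[·], E[·]⟩. (Inequality (18), obtained by combining the minimality of K̂ for the empirical objective with the minimality of K for the population objective.) -/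
open Matrix
open scoped ComplexOrder

/-- Squared Frobenius norm of a single complex matrix. -/
noncomputable def frobSq {p : ℕ} (M : Matrix (Fin p) (Fin p) ℂ) : ℝ :=
  ∑ i, ∑ j, ‖M i j‖ ^ 2

/-- The norm ‖X_{i,j}[·]‖ of the (i,j) entry group of a matrix sequence. -/
noncomputable def entryNorm {p F : ℕ} (X : Fin F → Matrix (Fin p) (Fin p) ℂ)
    (i j : Fin p) : ℝ :=
  Real.sqrt ((1 / (F : ℝ)) * ∑ f, ‖X f i j‖ ^ 2)

/-- The ℓ₁-norm ‖X‖₁ of a matrix sequence. -/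
noncomputable def l1Norm {p F : ℕ} (X : Fin F → Matrix (Fin p) (Fin p) ℂ) : ℝ :=
  ∑ i, ∑ j, entryNorm X i j

/-- The inner product ⟨A[·],B[·]⟩ (real part). -/
noncomputable def seqInner {p F : ℕ} (A B : Fin F → Matrix (Fin p) (Fin p) ℂ) : ℝ :=
  (1 / (F : ℝ)) * ∑ f, ((A f * B f).trace).re

/-- A{X} = (1/F) ∑_f log det X[f]. -/
noncomputable def Afun {p F : ℕ} (X : Fin F → Matrix (Fin p) (Fin p) ℂ) : ℝ :=
  (1 / (F : ℝ)) * ∑ f, Real.log (((X f).det).re)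

/-- The constraint set 𝒞: sequences of Hermitian matrices with 0 ≺ X[f] ⪯ I. -/
def memC {p F : ℕ} (X : Fin F → Matrix (Fin p) (Fin p) ℂ) : Prop :=
  ∀ f, (X f).IsHermitian ∧ (X f).PosDef ∧
    ((1 : Matrix (Fin p) (Fin p) ℂ) - X f).PosSemidef

/-- The gLASSO objective J(X) = -A{X} + ⟨Ŝ,X⟩ + λ‖X‖₁. -/
noncomputable def glassoObj {p F : ℕ} (Shat : Fin F → Matrix (Fin p) (Fin p) ℂ)
    (lam : ℝ) (X : Fin F → Matrix (Fin p) (Fin p) ℂ) : ℝ :=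
  - Afun X + seqInner Shat X + lam * l1Norm X

-- X_𝒮[·]: the sequence restricted to the index set 𝒮.
open Classical in
noncomputable def restrictSeq {p F : ℕ} (S : Set (Fin p × Fin p))
    (X : Fin F → Matrix (Fin p) (Fin p) ℂ) : Fin F → Matrix (Fin p) (Fin p) ℂ :=
  fun f => Matrix.of fun i j => if (i, j) ∈ S then X f i j else 0

/-- Generalized support of a matrix sequence. -/
def gsupp {p F : ℕ} (X : Fin F → Matrix (Fin p) (Fin p) ℂ) : Set (Fin p × Fin p) :=
  {ij | ∃ f, X f ij.1 ij.2 ≠ 0}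

/-!
Since `I ⪯ S[f]`, the population precision `K = S⁻¹` lies in `𝒞`, so minimality of `K̂`
gives `J(K̂) ≤ J(K)`. On the other hand `S⁻¹` minimizes the population objective
`-A{X} + ⟨S, X⟩` over positive definite `X` (Gibbs' inequality `log det (S X) ≤ tr (S X) - p`,
which is `log μ ≤ μ - 1` for the eigenvalues `μ` of the positive definite matrix congruent to
`S X`). Adding the two inequalities, the log-determinants cancel and the trace terms combine
to `⟨K̂ - K, S - Ŝ⟩`.
-/

open scoped MatrixOrder

namespace Matrix

variable {n : Type*} [DecidableEq n]

lemma posDef_of_posSemidef_sub_one {S : Matrix n n ℂ} (hS : (S - 1).PosSemidef) : S.PosDef := by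
  simpa using PosDef.one.add_posSemidef hS

variable [Fintype n]

lemma PosDef.re_det_pos {A : Matrix n n ℂ} (hA : A.PosDef) : 0 < A.det.re :=
  (Complex.pos_iff.mp hA.det_pos).1

lemma PosDef.isUnit_det {A : Matrix n n ℂ} (hA : A.PosDef) : IsUnit A.det :=
  (isUnit_iff_isUnit_det A).mp hA.isUnit

lemma PosDef.log_re_det_mul {A B : Matrix n n ℂ} (hA : A.PosDef) (hB : B.PosDef) :
    Real.log (A * B).det.re = Real.log A.det.re + Real.log B.det.re := by
  have hAim : A.det.im = 0 := (Complex.pos_iff.mp hA.det_pos).2.symm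
  rw [det_mul, Complex.mul_re, hAim, zero_mul, sub_zero,
    Real.log_mul hA.re_det_pos.ne' hB.re_det_pos.ne']

/-- `log λ ≤ λ - 1`, summed over the eigenvalues of `M`. -/
lemma PosDef.log_re_det_le_re_trace_sub_card {M : Matrix n n ℂ} (hM : M.PosDef) :
    Real.log M.det.re ≤ M.trace.re - Fintype.card n := by
  have hpos := hM.eigenvalues_pos
  rw [hM.isHermitian.det_eq_prod_eigenvalues, hM.isHermitian.trace_eq_sum_eigenvalues]
  simp only [RCLike.ofReal_eq_complex_ofReal, ← Complex.ofReal_prod, ← Complex.ofReal_sum,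
    Complex.ofReal_re, Real.log_prod fun i _ => (hpos i).ne']
  calc ∑ i, Real.log (hM.isHermitian.eigenvalues i)
      ≤ ∑ i, (hM.isHermitian.eigenvalues i - 1) :=
        Finset.sum_le_sum fun i _ => Real.log_le_sub_one_of_pos (hpos i)
    _ = _ := by simp [Finset.sum_sub_distrib]

/-- Writing `X = Yᴴ Y`, the matrix `Y S Yᴴ` is positive definite with the determinant and
trace of `S X`. -/
lemma PosDef.log_re_det_add_log_re_det_le {S X : Matrix n n ℂ} (hS : S.PosDef)
    (hX : X.PosDef) :
    Real.log S.det.re + Real.log X.det.re ≤ (S * X).trace.re - Fintype.card n := by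
  open scoped Matrix.Norms.L2Operator in
  obtain ⟨Y, hY, rfl⟩ :=
    CStarAlgebra.isStrictlyPositive_iff_eq_star_mul_self.mp hX.isStrictlyPositive
  have hM : (Y * S * Yᴴ).PosDef := by
    simpa using hS.conjTranspose_mul_mul_same (B := Yᴴ)
      (mulVec_injective_iff_isUnit.mpr hY.star)
  have hdet : (Y * S * Yᴴ).det = (S * (star Y * Y)).det := by
    simp only [det_mul, star_eq_conjTranspose]
    ring
  have htrace : (Y * S * Yᴴ).trace = (S * (star Y * Y)).trace := by
    rw [trace_mul_comm, ← Matrix.mul_assoc, trace_mul_comm, star_eq_conjTranspose]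
  rw [← hS.log_re_det_mul hX, ← hdet, ← htrace]
  exact hM.log_re_det_le_re_trace_sub_card

lemma PosDef.log_re_det_inv {S : Matrix n n ℂ} (hS : S.PosDef) :
    Real.log S⁻¹.det.re = - Real.log S.det.re := by
  have h := hS.inv.log_re_det_mul hS
  rw [nonsing_inv_mul _ hS.isUnit_det, det_one, Complex.one_re, Real.log_one] at h
  linarith

lemma PosDef.log_re_det_sub_re_trace_le {S X : Matrix n n ℂ} (hS : S.PosDef) (hX : X.PosDef) :
    Real.log X.det.re - (S * X).trace.re ≤ Real.log S⁻¹.det.re - (S * S⁻¹).trace.re := by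
  rw [hS.log_re_det_inv, mul_nonsing_inv _ hS.isUnit_det, trace_one]
  have := hS.log_re_det_add_log_re_det_le hX
  simp only [Complex.natCast_re]
  linarith

lemma posSemidef_one_sub_inv {S : Matrix n n ℂ} (hS : (S - 1).PosSemidef) :
    (1 - S⁻¹).PosSemidef := by
  open scoped Matrix.Norms.L2Operator in
  simpa [nonsing_inv_eq_ringInverse, le_iff] using
    CStarAlgebra.ringInverse_le_ringInverse (le_iff.mpr hS) (ha := by cfc_tac)

end Matrix

section Sequences

variable {p F : ℕ}

lemma seqInner_comm (A B : Fin F → Matrix (Fin p) (Fin p) ℂ) :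
    seqInner A B = seqInner B A := by
  simp only [seqInner, trace_mul_comm (A _)]

lemma seqInner_sub_left (A B C : Fin F → Matrix (Fin p) (Fin p) ℂ) :
    seqInner (fun f => A f - B f) C = seqInner A C - seqInner B C := by
  simp only [seqInner, Matrix.sub_mul, trace_sub, Complex.sub_re, Finset.sum_sub_distrib, mul_sub]

lemma memC_inv {S : Fin F → Matrix (Fin p) (Fin p) ℂ} (hS : ∀ f, (S f - 1).PosSemidef) :
    memC fun f => (S f)⁻¹ := fun f =>
  have hinv : (S f)⁻¹.PosDef := (posDef_of_posSemidef_sub_one (hS f)).inv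
  ⟨hinv.isHermitian, hinv, posSemidef_one_sub_inv (hS f)⟩

lemma neg_Afun_inv_add_seqInner_le {S X : Fin F → Matrix (Fin p) (Fin p) ℂ}
    (hS : ∀ f, (S f).PosDef) (hX : ∀ f, (X f).PosDef) :
    -Afun (fun f => (S f)⁻¹) + seqInner S (fun f => (S f)⁻¹) ≤ -Afun X + seqInner S X := by
  have h := mul_le_mul_of_nonneg_left
    (Finset.sum_le_sum fun f (_ : f ∈ Finset.univ) => (hS f).log_re_det_sub_re_trace_le (hX f))
    (by positivity : (0 : ℝ) ≤ 1 / F)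
  simp only [Finset.sum_sub_distrib, mul_sub] at h
  simp only [Afun, seqInner]
  linarith

end Sequences

theorem stmt_8_general (p F : ℕ) (lam : ℝ)
    (S : Fin F → Matrix (Fin p) (Fin p) ℂ)
    (hSlow : ∀ f, (S f - 1).PosSemidef)
    (K : Fin F → Matrix (Fin p) (Fin p) ℂ) (hK : ∀ f, K f = (S f)⁻¹)
    (Shat : Fin F → Matrix (Fin p) (Fin p) ℂ)
    (E : Fin F → Matrix (Fin p) (Fin p) ℂ) (hE : ∀ f, E f = S f - Shat f)
    (Khat : Fin F → Matrix (Fin p) (Fin p) ℂ) (hKhatC : memC Khat)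
    (hmin : ∀ X, memC X → glassoObj Shat lam Khat ≤ glassoObj Shat lam X) :
    lam * l1Norm Khat ≤ lam * l1Norm K + seqInner (fun f => Khat f - K f) E := by
  obtain rfl : K = fun f => (S f)⁻¹ := funext hK
  obtain rfl : E = fun f => S f - Shat f := funext hE
  have hempirical := hmin _ (memC_inv hSlow)
  have hpopulation := neg_Afun_inv_add_seqInner_le
    (fun f => posDef_of_posSemidef_sub_one (hSlow f)) fun f => (hKhatC f).2.1
  rw [seqInner_sub_left, seqInner_comm Khat, seqInner_comm (fun f => (S f)⁻¹),
    seqInner_sub_left, seqInner_sub_left]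
  unfold glassoObj at hempirical
  linarith

/-- inequality (18), combining minimality of K̂ for the empirical
objective with minimality of K for the population objective. -/
theorem stmt_8 (p F : ℕ) (hp : 1 ≤ p) (hF : 1 ≤ F) (lam : ℝ) (hlam : 0 < lam)
    (S : Fin F → Matrix (Fin p) (Fin p) ℂ)
    (hSherm : ∀ f, (S f).IsHermitian)
    (hSlow : ∀ f, (S f - 1).PosSemidef)
    (K : Fin F → Matrix (Fin p) (Fin p) ℂ) (hK : ∀ f, K f = (S f)⁻¹)
    (Shat : Fin F → Matrix (Fin p) (Fin p) ℂ) (hShat : ∀ f, (Shat f).IsHermitian)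
    (E : Fin F → Matrix (Fin p) (Fin p) ℂ) (hE : ∀ f, E f = S f - Shat f)
    (Khat : Fin F → Matrix (Fin p) (Fin p) ℂ) (hKhatC : memC Khat)
    (hmin : ∀ X, memC X → glassoObj Shat lam Khat ≤ glassoObj Shat lam X) :
    lam * l1Norm Khat ≤ lam * l1Norm K + seqInner (fun f => Khat f - K f) E :=
  stmt_8_general p F lam S hSlow K hK Shat E hE Khat hKhatC hmin
end

section
/- Fix integers p ≥ 1 and F ≥ 1. Let S[1],…,S[F] be p×p Hermitian matrices with I ⪯ S[f] for all f. Then for every nonempty subset 𝒮 ⊆ [p]×[p] with |𝒮| ≤ s (s ≥ 1 an integer) and every sequence X[·] of p×p Hermitian matrices: (1/F) ∑_{f=1}^F ‖S[f]^{1/2} X[f] S[f]^{1/2}‖_F² ≥ (1/s) ‖X_𝒮‖₁². (The compatibility condition, Assumption 3, is always valid with constant φ = 1 for a process whose spectral density matrix satisfies the eigenvalue lower bound (2) with L = 1.) -/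
open Matrix
open scoped ComplexOrder

/-!
Since `S ≥ I`, its square root `A` satisfies `AᴴA = AAᴴ = S ≥ I`, so multiplying by `A` on either
side can only increase the Frobenius norm: `‖AY‖_F² - ‖Y‖_F² = tr(Yᴴ(S - I)Y) ≥ 0`. Hence the
right-hand side dominates `(1/F) ∑_f ‖X[f]‖_F² = ∑_{i,j} ‖X_{i,j}[·]‖²`, and Cauchy–Schwarz over
the at most `s` entries of `𝒮` bounds `‖X_𝒮‖₁²` by `s` times this sum.
-/

section Frobenius

variable {n : ℕ}

lemma frobSq_nonneg (M : Matrix (Fin n) (Fin n) ℂ) : 0 ≤ frobSq M := by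
  unfold frobSq
  positivity

lemma frobSq_eq_re_trace (M : Matrix (Fin n) (Fin n) ℂ) : frobSq M = (Mᴴ * M).trace.re := by
  simp only [frobSq, trace, diag, mul_apply, conjTranspose_apply, Complex.re_sum]
  rw [Finset.sum_comm]
  refine Finset.sum_congr rfl fun j _ => Finset.sum_congr rfl fun i _ => ?_
  rw [← Complex.normSq_eq_norm_sq]
  simp [Complex.normSq_apply]

lemma frobSq_conjTranspose (M : Matrix (Fin n) (Fin n) ℂ) : frobSq Mᴴ = frobSq M := by
  simp only [frobSq, conjTranspose_apply, norm_star]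
  exact Finset.sum_comm

lemma frobSq_le_frobSq_mul_left {A Y : Matrix (Fin n) (Fin n) ℂ}
    (hA : (Aᴴ * A - 1).PosSemidef) : frobSq Y ≤ frobSq (A * Y) := by
  have hdiff : (A * Y)ᴴ * (A * Y) - Yᴴ * Y = Yᴴ * (Aᴴ * A - 1) * Y := by
    simp only [conjTranspose_mul, mul_sub, sub_mul, mul_one, mul_assoc]
  rw [frobSq_eq_re_trace, frobSq_eq_re_trace, ← sub_nonneg, ← Complex.sub_re, ← trace_sub, hdiff]
  exact (Complex.nonneg_iff.mp (hA.conjTranspose_mul_mul_same Y).trace_nonneg).1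

lemma frobSq_le_frobSq_mul_right {A Y : Matrix (Fin n) (Fin n) ℂ}
    (hA : (A * Aᴴ - 1).PosSemidef) : frobSq Y ≤ frobSq (Y * A) := by
  rw [← frobSq_conjTranspose Y, ← frobSq_conjTranspose (Y * A), conjTranspose_mul]
  exact frobSq_le_frobSq_mul_left (by rwa [conjTranspose_conjTranspose])

open scoped MatrixOrder in
lemma frobSq_le_frobSq_sqrt_mul_mul_sqrt {S : Matrix (Fin n) (Fin n) ℂ}
    (hS : (S - 1).PosSemidef) (X : Matrix (Fin n) (Fin n) ℂ) :
    frobSq X ≤ frobSq (CFC.sqrt S * X * CFC.sqrt S) := by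
  set A := CFC.sqrt S
  have hS_nonneg : 0 ≤ S := by simpa using (hS.add PosSemidef.one).nonneg
  have hAH : Aᴴ = A := (CFC.sqrt_nonneg S).posSemidef.isHermitian.eq
  have hAA : A * A = S := CFC.sqrt_mul_sqrt_self S hS_nonneg
  calc frobSq X ≤ frobSq (X * A) := frobSq_le_frobSq_mul_right (by rwa [hAH, hAA])
    _ ≤ frobSq (A * (X * A)) := frobSq_le_frobSq_mul_left (by rwa [hAH, hAA])
    _ = frobSq (A * X * A) := by rw [mul_assoc]

end Frobenius

section EntryNorm

variable {p F : ℕ} (X : Fin F → Matrix (Fin p) (Fin p) ℂ)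

lemma entryNorm_sq (i j : Fin p) :
    entryNorm X i j ^ 2 = (1 / (F : ℝ)) * ∑ f, ‖X f i j‖ ^ 2 :=
  Real.sq_sqrt (by positivity)

lemma sum_entryNorm_sq :
    ∑ ij : Fin p × Fin p, entryNorm X ij.1 ij.2 ^ 2 = (1 / (F : ℝ)) * ∑ f, frobSq (X f) := by
  simp only [entryNorm_sq, ← Finset.mul_sum, frobSq, Fintype.sum_prod_type]
  congr 1
  exact (Finset.sum_congr rfl fun _ _ => Finset.sum_comm).trans Finset.sum_comm

open Classical in
lemma entryNorm_restrictSeq (𝒮 : Set (Fin p × Fin p)) (i j : Fin p) :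
    entryNorm (restrictSeq 𝒮 X) i j = if (i, j) ∈ 𝒮 then entryNorm X i j else 0 := by
  split_ifs with h <;> simp [entryNorm, restrictSeq, h]

lemma l1Norm_restrictSeq_sq_le (𝒮 : Set (Fin p × Fin p)) :
    l1Norm (restrictSeq 𝒮 X) ^ 2 ≤ 𝒮.ncard * ((1 / (F : ℝ)) * ∑ f, frobSq (X f)) := by
  classical
  set e : Fin p × Fin p → ℝ := fun ij => entryNorm X ij.1 ij.2
  have hl1 : l1Norm (restrictSeq 𝒮 X) = ∑ ij ∈ 𝒮.toFinset, e ij := by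
    rw [l1Norm, ← Fintype.sum_prod_type']
    simp only [entryNorm_restrictSeq, ← Set.mem_toFinset (s := 𝒮)]
    rw [Finset.sum_ite_mem, Finset.univ_inter]
  rw [hl1]
  calc (∑ ij ∈ 𝒮.toFinset, e ij) ^ 2 ≤ 𝒮.toFinset.card * ∑ ij ∈ 𝒮.toFinset, e ij ^ 2 :=
        sq_sum_le_card_mul_sum_sq
    _ ≤ 𝒮.ncard * ∑ ij, e ij ^ 2 := by
        rw [← Set.ncard_eq_toFinset_card']
        gcongr
        exact Finset.subset_univ _
    _ = _ := by rw [sum_entryNorm_sq]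

end EntryNorm

theorem stmt_14_general (p F s : ℕ)
    (S : Fin F → Matrix (Fin p) (Fin p) ℂ)
    (hSlow : ∀ f, (S f - 1).PosSemidef)
    (𝒮 : Set (Fin p × Fin p)) (hcard : 𝒮.ncard ≤ s)
    (X : Fin F → Matrix (Fin p) (Fin p) ℂ) :
    (1 / (s : ℝ)) * (l1Norm (restrictSeq 𝒮 X)) ^ 2 ≤
      (1 / (F : ℝ)) * ∑ f, frobSq ((open scoped MatrixOrder in CFC.sqrt (S f)) * X f *
        (open scoped MatrixOrder in CFC.sqrt (S f))) := by
  have hmean_nonneg : 0 ≤ (1 / (F : ℝ)) * ∑ f, frobSq (X f) :=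
    mul_nonneg (by positivity) (Finset.sum_nonneg fun f _ => frobSq_nonneg (X f))
  have hratio : (𝒮.ncard : ℝ) / s ≤ 1 := div_le_one_of_le₀ (by exact_mod_cast hcard) s.cast_nonneg
  calc (1 / (s : ℝ)) * l1Norm (restrictSeq 𝒮 X) ^ 2
      ≤ (1 / (s : ℝ)) * (𝒮.ncard * ((1 / (F : ℝ)) * ∑ f, frobSq (X f))) := by
        gcongr
        exact l1Norm_restrictSeq_sq_le X 𝒮
    _ = (𝒮.ncard / s) * ((1 / (F : ℝ)) * ∑ f, frobSq (X f)) := by ring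
    _ ≤ (1 / (F : ℝ)) * ∑ f, frobSq (X f) := mul_le_of_le_one_left hmean_nonneg hratio
    _ ≤ _ := by
        gcongr with f
        exact frobSq_le_frobSq_sqrt_mul_mul_sqrt (hSlow f) (X f)

/-- the compatibility condition (Assumption 3) always holds with
constant φ = 1 when the SDM satisfies the eigenvalue lower bound with L = 1. -/
theorem stmt_14 (p F s : ℕ) (hp : 1 ≤ p) (hF : 1 ≤ F) (hs : 1 ≤ s)
    (S : Fin F → Matrix (Fin p) (Fin p) ℂ)
    (hSherm : ∀ f, (S f).IsHermitian)
    (hSpsd : ∀ f, (S f).PosSemidef)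
    (hSlow : ∀ f, (S f - 1).PosSemidef)
    (𝒮 : Set (Fin p × Fin p)) (h𝒮ne : 𝒮.Nonempty) (hcard : 𝒮.ncard ≤ s)
    (X : Fin F → Matrix (Fin p) (Fin p) ℂ) (hX : ∀ f, (X f).IsHermitian) :
    (1 / (s : ℝ)) * (l1Norm (restrictSeq 𝒮 X)) ^ 2 ≤
      (1 / (F : ℝ)) * ∑ f, frobSq ((open scoped MatrixOrder in CFC.sqrt (S f)) * X f *
        (open scoped MatrixOrder in CFC.sqrt (S f))) :=
  stmt_14_general p F s S hSlow 𝒮 hcard X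
end
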